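/- Let R be a noetherian integral domain, B = R[T_1,…,T_n], and let h = f_1T_1+⋯+f_nT_n+f = d·(f_1'T_1+⋯+f_n'T_n+f') be a forcing equation with (f_1,…,f_n) ≠ 0, d ∈ R, such that h' = f_1'T_1+⋯+f_n'T_n+f' is a prime element of B. If the ideal (f_1',…,f_n') of R is not contained in any minimal prime over (d), then Spec B/(h) is connected. -/

import Mathlib

open MvPolynomial

/-- The forcing equation `h = f_1T_1+⋯+f_nT_n+f₀` in `B = R[T_1,…,T_n]`. -/
noncomputable abbrev forcingPoly (R : Type*) [CommRing R] (n : ℕ) (f : Fin n → R) (f₀ : R) :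
    MvPolynomial (Fin n) R :=
  (∑ i : Fin n, C (f i) * X i) + C f₀

private lemma forcing_meet (R : Type*) [CommRing R] [IsDomain R] (n : ℕ) (q : Ideal R)
    (hq : q.IsPrime) (f' : Fin n → R) (f₀' : R) (i : Fin n) (hi : f' i ∉ q) :
    ∃ P : Ideal (MvPolynomial (Fin n) R), P.IsPrime ∧ Ideal.map C q ≤ P ∧
      forcingPoly R n f' f₀' ∈ P := by
  letI := hq
  set K := FractionRing (R ⧸ q)
  let ψ : R →+* K := (algebraMap (R ⧸ q) K).comp (Ideal.Quotient.mk q)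
  have hψ : ψ (f' i) ≠ 0 := by
    simp only [ψ, RingHom.comp_apply]
    intro h
    apply hi
    rw [← Ideal.Quotient.eq_zero_iff_mem]
    exact (IsFractionRing.injective (R ⧸ q) K) (by simpa using h)
  let v : Fin n → K := fun j => if j = i then -ψ f₀' / ψ (f' i) else 0
  let φ : MvPolynomial (Fin n) R →+* K := eval₂Hom ψ v
  refine ⟨RingHom.ker φ, RingHom.ker_isPrime φ, ?_, ?_⟩
  · rw [Ideal.map_le_iff_le_comap]
    intro r hr
    simp only [Ideal.mem_comap, RingHom.mem_ker, φ, eval₂Hom_C]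
    simp [ψ, Ideal.Quotient.eq_zero_iff_mem.mpr hr]
  · simp only [RingHom.mem_ker, forcingPoly, map_add, map_sum, map_mul, φ, eval₂Hom_C,
      eval₂Hom_X']
    rw [Finset.sum_eq_single i (by intro j _ hj; simp [v, hj]) (by simp)]
    simp only [v, if_pos rfl]
    rw [mul_div_assoc', mul_div_cancel_left₀ _ hψ]
    ring

private lemma map_C_isPrime (R : Type*) [CommRing R] (n : ℕ) (q : Ideal R) (hq : q.IsPrime) :
    (Ideal.map (C : R →+* MvPolynomial (Fin n) R) q).IsPrime := by
  letI := hq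
  have : q = RingHom.ker (Ideal.Quotient.mk q) := (Ideal.mk_ker).symm
  rw [this, ← MvPolynomial.ker_map]
  exact RingHom.ker_isPrime _

/-- Corollary `Zusam`: Let `R` be a noetherian domain and
`h = f_1T_1+⋯+f_nT_n+f₀ = d·h'` a forcing equation with `(f_1,…,f_n) ≠ 0`, where
`h' = f_1'T_1+⋯+f_n'T_n+f₀'` is a prime element of `B = R[T_1,…,T_n]`. If the ideal
`(f_1',…,f_n')` is not contained in any minimal prime over `(d)`, then `Spec B/(h)` is
connected. -/
theorem forcing_algebra_connected_of_coefficients_not_in_minimal_primes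
    (R : Type*) [CommRing R] [IsDomain R] [IsNoetherianRing R]
    (n : ℕ) (f f' : Fin n → R) (f₀ f₀' d : R) (hf : ∃ i, f i ≠ 0)
    (hfact : forcingPoly R n f f₀ = C d * forcingPoly R n f' f₀')
    (hprime : Prime (forcingPoly R n f' f₀'))
    (hnotin : ∀ q ∈ (Ideal.span {d}).minimalPrimes,
      ¬ Ideal.span (Set.range f') ≤ q) :
    ConnectedSpace
      (PrimeSpectrum (MvPolynomial (Fin n) R ⧸ Ideal.span {forcingPoly R n f f₀})) := by
  set B := MvPolynomial (Fin n) R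
  set h : B := forcingPoly R n f f₀ with hh
  set h' : B := forcingPoly R n f' f₀' with hh'
  have hspan' : (Ideal.span {h'}).IsPrime :=
    (Ideal.span_singleton_prime hprime.ne_zero).mpr hprime
  -- the distinguished point
  let x₀ : PrimeSpectrum B := ⟨Ideal.span {h'}, hspan'⟩
  set S : Set (PrimeSpectrum B) := PrimeSpectrum.zeroLocus {h} with hS
  have hx₀S : x₀ ∈ S := by
    rw [hS, PrimeSpectrum.mem_zeroLocus, Set.singleton_subset_iff]
    rw [hfact]
    exact Ideal.mul_mem_left _ _ (Ideal.mem_span_singleton_self _)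
  have hVh'sub : PrimeSpectrum.zeroLocus ({h'} : Set B) ⊆ S := by
    intro x hx
    rw [PrimeSpectrum.mem_zeroLocus, Set.singleton_subset_iff] at hx ⊢
    rw [hfact]
    exact Ideal.mul_mem_left _ _ hx
  have hVh'pc : IsPreconnected (PrimeSpectrum.zeroLocus ({h'} : Set B)) := by
    have : IsIrreducible (PrimeSpectrum.zeroLocus ((Ideal.span {h'} : Ideal B) : Set B)) := by
      rw [PrimeSpectrum.isIrreducible_zeroLocus_iff_of_radical _ hspan'.isRadical]
      exact hspan'
    rw [PrimeSpectrum.zeroLocus_span] at this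
    exact this.isConnected.isPreconnected
  have hconn : IsConnected S := by
    refine ⟨⟨x₀, hx₀S⟩, isPreconnected_of_forall x₀ ?_⟩
    intro y hy
    by_cases hcase : h' ∈ y.asIdeal
    · exact ⟨PrimeSpectrum.zeroLocus {h'}, hVh'sub,
        by rw [PrimeSpectrum.mem_zeroLocus, Set.singleton_subset_iff];
           exact Ideal.mem_span_singleton_self _,
        by rwa [PrimeSpectrum.mem_zeroLocus, Set.singleton_subset_iff], hVh'pc⟩
    · -- then C d ∈ y
      have hyh : h ∈ y.asIdeal := by
        have := hy
        rwa [hS, PrimeSpectrum.mem_zeroLocus, Set.singleton_subset_iff] at this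
      have hCd : C d ∈ y.asIdeal := by
        rcases y.isPrime.mem_or_mem (hfact ▸ hyh) with h1 | h1
        · exact h1
        · exact absurd h1 hcase
      have hd : d ∈ y.asIdeal.comap (C : R →+* B) := hCd
      haveI : (y.asIdeal.comap (C : R →+* B)).IsPrime := Ideal.comap_isPrime _ _
      obtain ⟨q, hqmin, hqle⟩ := Ideal.exists_minimalPrimes_le
        (Ideal.span_le.mpr (Set.singleton_subset_iff.mpr hd))
      have hqprime : q.IsPrime := hqmin.1.1
      obtain ⟨i, hi⟩ : ∃ i, f' i ∉ q := by
        by_contra hcon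
        push_neg at hcon
        exact hnotin q hqmin (Ideal.span_le.mpr (Set.range_subset_iff.mpr hcon))
      obtain ⟨P, hP, hPq, hPh'⟩ := forcing_meet R n q hqprime f' f₀' i hi
      have hCqsub : PrimeSpectrum.zeroLocus ((Ideal.map C q : Ideal B) : Set B) ⊆ S := by
        intro x hx
        rw [PrimeSpectrum.mem_zeroLocus] at hx
        rw [hS, PrimeSpectrum.mem_zeroLocus, Set.singleton_subset_iff, hfact]
        refine Ideal.mul_mem_right _ _ (hx ?_)
        exact Ideal.mem_map_of_mem _ (hqmin.1.2 (Ideal.mem_span_singleton_self d))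
      have hCqpc : IsPreconnected (PrimeSpectrum.zeroLocus ((Ideal.map C q : Ideal B) : Set B)) := by
        have hp := map_C_isPrime R n q hqprime
        exact ((PrimeSpectrum.isIrreducible_zeroLocus_iff_of_radical _ hp.isRadical).mpr
          hp).isConnected.isPreconnected
      have hmx : x₀ ∈ PrimeSpectrum.zeroLocus ({h'} : Set B) := by
        rw [PrimeSpectrum.mem_zeroLocus, Set.singleton_subset_iff]
        exact Ideal.mem_span_singleton_self _
      have hmy : y ∈ PrimeSpectrum.zeroLocus ((Ideal.map C q : Ideal B) : Set B) := by
        rw [PrimeSpectrum.mem_zeroLocus]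
        exact Ideal.map_le_iff_le_comap.mpr hqle
      have hz1 : (⟨P, hP⟩ : PrimeSpectrum B) ∈ PrimeSpectrum.zeroLocus ({h'} : Set B) := by
        rw [PrimeSpectrum.mem_zeroLocus, Set.singleton_subset_iff]; exact hPh'
      have hz2 : (⟨P, hP⟩ : PrimeSpectrum B) ∈
          PrimeSpectrum.zeroLocus ((Ideal.map C q : Ideal B) : Set B) := by
        rw [PrimeSpectrum.mem_zeroLocus]; exact hPq
      exact ⟨PrimeSpectrum.zeroLocus {h'} ∪
        PrimeSpectrum.zeroLocus ((Ideal.map C q : Ideal B) : Set B),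
        Set.union_subset hVh'sub hCqsub, Set.mem_union_left _ hmx, Set.mem_union_right _ hmy,
        IsPreconnected.union _ hz1 hz2 hVh'pc hCqpc⟩
  -- transfer along the closed embedding Spec(B/(h)) → Spec B
  let π := Ideal.Quotient.mk (Ideal.span {h})
  have hsurj : Function.Surjective π := Ideal.Quotient.mk_surjective
  have hemb := PrimeSpectrum.isClosedEmbedding_comap_of_surjective _ π hsurj
  have hrange : Set.range (PrimeSpectrum.comap π) = S := by
    rw [range_comap_of_surjective _ π hsurj, Ideal.mk_ker,
      PrimeSpectrum.zeroLocus_span]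
  have hne : Nonempty (PrimeSpectrum (B ⧸ Ideal.span {h})) := by
    obtain ⟨z, hz⟩ := hrange ▸ hconn.nonempty
    obtain ⟨w, -⟩ := hz
    exact ⟨w⟩
  haveI := hne
  haveI : PreconnectedSpace (PrimeSpectrum (B ⧸ Ideal.span {h})) := by
    refine ⟨?_⟩
    have := hemb.toIsInducing.isPreconnected_image
      (s := (Set.univ : Set (PrimeSpectrum (B ⧸ Ideal.span {h}))))
    rw [Set.image_univ, hrange] at this
    exact this.mp hconn.isPreconnected
  exact ⟨hne⟩
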